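/- arXiv:2109.03352 — 3 statements merged into one kernel-verified Lean document; each statement's English description precedes it below -/
import Mathlib

section
/- Every square-zero extension of the algebraic Toeplitz algebra splits: if R is a unital associative ℂ-algebra and p : R → T_alg is a surjective unital ℂ-algebra homomorphism such that x·y = 0 for all x, y in the kernel of p, then there exists a unital ℂ-algebra homomorphism j : T_alg → R with p ∘ j = id on T_alg. -/
/-- The defining relation of the algebraic Toeplitz algebra: `U * V = 1`,
where `U = ι false` and `V = ι true` are the two generators of the free algebra. -/
inductive ToeplitzRel : FreeAlgebra ℂ Bool → FreeAlgebra ℂ Bool → Prop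
  | rel : ToeplitzRel (FreeAlgebra.ι ℂ false * FreeAlgebra.ι ℂ true) 1

/-- The algebraic Toeplitz algebra: the quotient of the free `ℂ`-algebra on two
generators `U, V` by the two-sided ideal generated by `U * V - 1`. -/
abbrev Talg : Type := RingQuot ToeplitzRel

/-- The image `u` of the generator `U` in the algebraic Toeplitz algebra. -/
noncomputable def Tu : Talg := RingQuot.mkAlgHom ℂ ToeplitzRel (FreeAlgebra.ι ℂ false)

/-- The image `v` of the generator `V` in the algebraic Toeplitz algebra. -/
noncomputable def Tv : Talg := RingQuot.mkAlgHom ℂ ToeplitzRel (FreeAlgebra.ι ℂ true)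

/-!
Lift `u, v` to any preimages `a, b`. Then `a * b = 1 + n` with `n` in the kernel, so `n * n = 0`
and `(1 + n) * (1 - n) = 1`: replacing `b` by `b * (1 - n)`, which has the same image, gives an
exact right inverse of `a`. By the universal property of `T_alg`, `u ↦ a`, `v ↦ b * (1 - n)` is a
splitting.
-/

theorem Tu_mul_Tv : Tu * Tv = 1 := by
  simpa [Tu, Tv] using RingQuot.mkAlgHom_rel ℂ ToeplitzRel.rel

namespace Talg

variable {A : Type*} [Ring A] [Algebra ℂ A]

noncomputable def lift (a b : A) (hab : a * b = 1) : Talg →ₐ[ℂ] A :=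
  RingQuot.liftAlgHom ℂ ⟨FreeAlgebra.lift ℂ (fun i => if i then b else a), by
    rintro _ _ ⟨⟩
    simpa using hab⟩

@[simp]
theorem lift_Tu (a b : A) (hab : a * b = 1) : lift a b hab Tu = a := by
  simp [lift, Tu]

@[simp]
theorem lift_Tv (a b : A) (hab : a * b = 1) : lift a b hab Tv = b := by
  simp [lift, Tv]

@[ext]
theorem algHom_ext {f g : Talg →ₐ[ℂ] A} (hu : f Tu = g Tu) (hv : f Tv = g Tv) : f = g := by
  refine RingQuot.ringQuot_ext' ℂ f g (FreeAlgebra.hom_ext (funext fun i => ?_))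
  cases i
  · exact hu
  · exact hv

end Talg

theorem mul_one_sub_eq_one_of_mul_self_eq_zero {R : Type*} [Ring R] {n : R} (hn : n * n = 0) :
    (1 + n) * (1 - n) = 1 := by
  rw [add_mul, one_mul, mul_sub, mul_one, hn]
  abel

theorem exists_rightInverse_of_map_mul_eq_one {R S : Type*} [Ring R] [Ring S] (p : R →+* S)
    (hsq : ∀ x y : R, p x = 0 → p y = 0 → x * y = 0) {a b : R} (hab : p a * p b = 1) :
    ∃ b' : R, p b' = p b ∧ a * b' = 1 := by
  set n := a * b - 1
  have hpn : p n = 0 := by simp [n, hab]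
  refine ⟨b * (1 - n), by simp [hpn], ?_⟩
  rw [← mul_assoc, show a * b = 1 + n by simp [n],
    mul_one_sub_eq_one_of_mul_self_eq_zero (hsq n n hpn hpn)]

/-- Every square-zero extension of the algebraic Toeplitz algebra splits. -/
theorem stmt0 (R : Type) [Ring R] [Algebra ℂ R] (p : R →ₐ[ℂ] Talg)
    (hsurj : Function.Surjective p)
    (hsq : ∀ x y : R, p x = 0 → p y = 0 → x * y = 0) :
    ∃ j : Talg →ₐ[ℂ] R, p.comp j = AlgHom.id ℂ Talg := by
  obtain ⟨a, ha⟩ := hsurj Tu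
  obtain ⟨b, hb⟩ := hsurj Tv
  obtain ⟨b', hb', hab'⟩ :=
    exists_rightInverse_of_map_mul_eq_one p.toRingHom hsq (a := a) (b := b)
      (by simp [ha, hb, Tu_mul_Tv])
  refine ⟨Talg.lift a b' hab', Talg.algHom_ext ?_ ?_⟩
  · simp [ha]
  · simpa [hb] using hb'
end

section
/- For every element a of T_alg and every k ∈ ℕ the following two inequalities hold: ‖a‖'_k ≤ ‖a‖_{k+1} and ‖a‖_k ≤ (4^k + 1) · ‖a‖'_{2k}. Here, writing a uniquely as a finite sum a = Σ_{i,j} c_{ij} v^i u^j, one sets ‖a‖_k := Σ_{i,j} |c_{ij}| (1+i)^k (1+j)^k; and writing a uniquely as a finite sum a = b_0·1 + Σ_{p≥1} b_p v^p + Σ_{p≥1} b_{−p} u^p + Σ_{i,j} a_{ij} e_{i,j}, one sets ‖a‖'_k := Σ_{i,j} |a_{ij}| (1+i+j)^k + Σ_{p∈ℤ} |b_p| (1+|p|)^k. In particular the two families of norms {‖·‖_k} and {‖·‖'_k} on T_alg are equivalent. -/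
/-- The matrix units `e_{i,j} = v^i (1 - v u) u^j` of the algebraic Toeplitz algebra. -/
noncomputable def Te (i j : ℕ) : Talg := Tv ^ i * (1 - Tv * Tu) * Tu ^ j

/-- `z^p` interpreted in the algebraic Toeplitz algebra: `v^p` for `p ≥ 0`
and `u^{-p}` for `p < 0`. -/
noncomputable def Tz (p : ℤ) : Talg := if 0 ≤ p then Tv ^ p.toNat else Tu ^ (-p).toNat

/-!
`v` acts on finitely supported sequences as the unilateral shift and `u` as its adjoint. In this
representation the `(m, n)` matrix entry of `Σ b_p z^p + Σ a_{ij} e_{i,j}` is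
`b_{m-n} + a_{m,n}`, which makes the second expansion unique. The change of basis is explicit:
`z^p = v^{p⁺} u^{p⁻}` and `e_{i,j} = v^i u^j - v^{i+1} u^{j+1}`, and telescoping along the
diagonal through `(i, j)` gives `v^i u^j = z^{i-j} - Σ_{r < min i j} e_{i-m+r, j-m+r}` with
`m = min i j`. Both norms are weighted `ℓ¹` norms of coefficient vectors, so by the triangle
inequality it suffices to bound the image of a single basis vector:
`‖v^i u^j‖'_k ≤ (1 + min i j) ((1+i)(1+j))^k ≤ ((1+i)(1+j))^{k+1}` and
`‖e_{i,j}‖_k ≤ ((1+i)(1+j))^k + ((2+i)(2+j))^k ≤ (1 + 4^k) (1+i+j)^{2k}`.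
-/

open Finsupp Finset

noncomputable section

section WeightedL1

variable {𝕜 α ι M : Type*} [NormedField 𝕜]

def weightedL1 (w : α → ℝ) (hw : ∀ a, 0 ≤ w a) : Seminorm 𝕜 (α →₀ 𝕜) :=
  Seminorm.of (fun f => f.sum fun a x => ‖x‖ * w a)
    (fun f g => by
      classical
      rw [sum_of_support_subset f subset_union_left _ (by simp),
        sum_of_support_subset g subset_union_right _ (by simp),
        sum_of_support_subset (f + g) support_add _ (by simp), ← sum_add_distrib]
      refine sum_le_sum fun a _ => ?_
      rw [← add_mul, Finsupp.add_apply]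
      exact mul_le_mul_of_nonneg_right (norm_add_le _ _) (hw a))
    (fun r f => by
      rw [sum_smul_index' (by simp), Finsupp.mul_sum]
      simp only [norm_smul, mul_assoc])

variable {w : α → ℝ} {hw : ∀ a, 0 ≤ w a}

lemma weightedL1_apply (f : α →₀ 𝕜) : weightedL1 w hw f = f.sum fun a x => ‖x‖ * w a := rfl

lemma weightedL1_single (a : α) (x : 𝕜) : weightedL1 w hw (single a x) = ‖x‖ * w a := by
  rw [weightedL1_apply, sum_single_index (by simp)]

lemma Seminorm.map_sum_le [AddCommGroup M] [Module 𝕜 M] (p : Seminorm 𝕜 M) (s : Finset ι)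
    (g : ι → M) : p (∑ i ∈ s, g i) ≤ ∑ i ∈ s, p (g i) :=
  le_sum_of_subadditive p (map_zero p).le (map_add_le_add p) s g

lemma Seminorm.map_le_weightedL1 [AddCommGroup M] [Module 𝕜 M] (p : Seminorm 𝕜 M)
    (L : (ι →₀ 𝕜) →ₗ[𝕜] M) {w : ι → ℝ} (hw : ∀ i, 0 ≤ w i) {C : ℝ}
    (hL : ∀ i, p (L (single i 1)) ≤ C * w i) (c : ι →₀ 𝕜) : p (L c) ≤ C * weightedL1 w hw c := by
  conv_lhs => rw [← c.sum_single]
  rw [map_finsuppSum, weightedL1_apply, Finsupp.sum, Finsupp.sum, Finset.mul_sum]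
  refine (p.map_sum_le _ _).trans (sum_le_sum fun i _ => ?_)
  rw [← smul_single_one, map_smul, map_smul_eq_mul]
  calc ‖c i‖ * p (L (single i 1)) ≤ ‖c i‖ * (C * w i) :=
        mul_le_mul_of_nonneg_left (hL i) (norm_nonneg _)
    _ = C * (‖c i‖ * w i) := by ring

end WeightedL1

def zIndex (p : ℤ) : ℕ × ℕ := (p.toNat, (-p).toNat)

section DiagonalExpansion

variable (R : Type*) {M : Type*} [Ring R] [AddCommGroup M] [Module R M]

-- `f (i, j)` stands for `v^i u^j`: for `f = Tvu` this is `(b, a) ↦ Σ b_p z^p + Σ a_{ij} e_{i,j}`,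
-- for `f = (single · 1)` it rewrites such coefficients in the basis `v^i u^j`.
def diagonalExpansion (f : ℕ × ℕ → M) : (ℤ →₀ R) × (ℕ × ℕ →₀ R) →ₗ[R] M :=
  (linearCombination R (f ∘ zIndex)).coprod
    (linearCombination R fun s => f s - f (s.1 + 1, s.2 + 1))

-- `v^i u^j = z^{i-j} - Σ_{r < min i j} e_{r + (i - j), r + (j - i)}`, where at most one of the
-- truncated differences `i - j`, `j - i` is nonzero.
def toPrimedCoeffs : (ℕ × ℕ →₀ R) →ₗ[R] (ℤ →₀ R) × (ℕ × ℕ →₀ R) :=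
  linearCombination R fun s => (single ((s.1 : ℤ) - s.2) 1,
    -∑ r ∈ range (min s.1 s.2), single (r + (s.1 - s.2), r + (s.2 - s.1)) 1)

variable {R}

lemma eq_sub_sum_diagonal (f : ℕ × ℕ → M) (i j : ℕ) :
    f (i, j) = f (zIndex ((i : ℤ) - j)) - ∑ r ∈ range (min i j),
      (f (r + (i - j), r + (j - i)) - f (r + (i - j) + 1, r + (j - i) + 1)) := by
  have htel := sum_range_sub' (fun r => f (r + (i - j), r + (j - i))) (min i j)
  simp only [add_right_comm _ 1] at htel
  rw [htel, show zIndex ((i : ℤ) - j) = (0 + (i - j), 0 + (j - i)) by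
      simp only [zIndex, Prod.mk.injEq]; omega,
    show (min i j + (i - j), min i j + (j - i)) = (i, j) by simp only [Prod.mk.injEq]; omega,
    sub_sub_cancel]

lemma diagonalExpansion_toPrimedCoeffs (f : ℕ × ℕ → M) (c : ℕ × ℕ →₀ R) :
    diagonalExpansion R f (toPrimedCoeffs R c) = linearCombination R f c := by
  suffices (diagonalExpansion R f).comp (toPrimedCoeffs R) = linearCombination R f from
    LinearMap.congr_fun this c
  ext ⟨i, j⟩
  simp only [diagonalExpansion, toPrimedCoeffs, LinearMap.coe_comp, Function.comp_apply,
    lsingle_apply, linearCombination_single, one_smul, LinearMap.coprod_apply, map_neg, map_sum]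
  rw [← sub_eq_add_neg]
  exact (eq_sub_sum_diagonal f i j).symm

lemma diagonalExpansion_single_toPrimedCoeffs (c : ℕ × ℕ →₀ R) :
    diagonalExpansion R (fun s => single s 1) (toPrimedCoeffs R c) = c := by
  rw [diagonalExpansion_toPrimedCoeffs, linearCombination_apply]
  simp

end DiagonalExpansion

def Tvu (s : ℕ × ℕ) : Talg := Tv ^ s.1 * Tu ^ s.2

lemma Tz_eq_Tvu (p : ℤ) : Tz p = Tvu (zIndex p) := by
  unfold Tz Tvu zIndex
  split_ifs with hp
  · rw [show (-p).toNat = 0 by omega, pow_zero, mul_one]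
  · rw [show p.toNat = 0 by omega, pow_zero, one_mul]

lemma Te_eq_Tvu_sub (i j : ℕ) : Te i j = Tvu (i, j) - Tvu (i + 1, j + 1) := by
  simp only [Te, Tvu, pow_succ Tv, pow_succ' Tu, mul_sub, sub_mul, mul_one, mul_assoc]

lemma diagonalExpansion_Tvu (b : ℤ →₀ ℂ) (am : ℕ × ℕ →₀ ℂ) :
    diagonalExpansion ℂ Tvu (b, am)
      = (b.sum fun p x => x • Tz p) + am.sum fun ij x => x • Te ij.1 ij.2 := by
  simp only [diagonalExpansion, LinearMap.coprod_apply, linearCombination_apply,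
    Function.comp_apply, Tz_eq_Tvu, Te_eq_Tvu_sub]

def unilateralShift : Module.End ℂ (ℕ →₀ ℂ) := Finsupp.lsum ℂ fun n => Finsupp.lsingle (n + 1)

def backwardShift : Module.End ℂ (ℕ →₀ ℂ) :=
  Finsupp.lsum ℂ fun n => match n with
    | 0 => 0
    | m + 1 => Finsupp.lsingle m

@[simp] lemma unilateralShift_single (n : ℕ) (x : ℂ) :
    unilateralShift (single n x) = single (n + 1) x := by
  simp [unilateralShift]

@[simp] lemma backwardShift_single_zero (x : ℂ) : backwardShift (single 0 x) = 0 := by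
  simp [backwardShift]

@[simp] lemma backwardShift_single_succ (m : ℕ) (x : ℂ) :
    backwardShift (single (m + 1) x) = single m x := by
  simp [backwardShift]

lemma backwardShift_mul_unilateralShift : backwardShift * unilateralShift = 1 :=
  Finsupp.lhom_ext fun n x => by simp [Module.End.mul_apply]

lemma unilateralShift_pow_single (i n : ℕ) (x : ℂ) :
    (unilateralShift ^ i) (single n x) = single (n + i) x := by
  induction i generalizing n with
  | zero => simp
  | succ i ih =>
    rw [pow_succ, Module.End.mul_apply, unilateralShift_single, ih, add_right_comm, add_assoc]

lemma backwardShift_pow_single (j n : ℕ) (x : ℂ) :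
    (backwardShift ^ j) (single n x) = if j ≤ n then single (n - j) x else 0 := by
  induction j generalizing n with
  | zero => simp
  | succ j ih =>
    rw [pow_succ, Module.End.mul_apply]
    rcases n with _ | m
    · simp
    · rw [backwardShift_single_succ, ih]
      exact if_congr (by omega) (by congr 1; omega) rfl

def toeplitzRep : Talg →ₐ[ℂ] Module.End ℂ (ℕ →₀ ℂ) :=
  RingQuot.liftAlgHom ℂ
    ⟨FreeAlgebra.lift ℂ (fun b => bif b then unilateralShift else backwardShift), by
      rintro _ _ ⟨⟩
      simp [backwardShift_mul_unilateralShift]⟩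

lemma toeplitzRep_Tvu (s : ℕ × ℕ) :
    toeplitzRep (Tvu s) = unilateralShift ^ s.1 * backwardShift ^ s.2 := by
  simp [toeplitzRep, Tvu, Tu, Tv, RingQuot.liftAlgHom_mkAlgHom_apply]

def matrixEntry (m n : ℕ) : Talg →ₗ[ℂ] ℂ :=
  Finsupp.lapply m ∘ₗ LinearMap.applyₗ (single n 1) ∘ₗ toeplitzRep.toLinearMap

lemma matrixEntry_Tvu (m n i j : ℕ) :
    matrixEntry m n (Tvu (i, j)) = if j ≤ n ∧ n - j + i = m then 1 else 0 := by
  simp only [matrixEntry, LinearMap.comp_apply, AlgHom.toLinearMap_apply, toeplitzRep_Tvu,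
    LinearMap.applyₗ_apply_apply, Module.End.mul_apply, backwardShift_pow_single]
  split_ifs <;> simp [unilateralShift_pow_single, single_apply] <;> omega

lemma matrixEntry_diagonalExpansion_Tvu (m n : ℕ) (x : (ℤ →₀ ℂ) × (ℕ × ℕ →₀ ℂ)) :
    matrixEntry m n (diagonalExpansion ℂ Tvu x) = x.1 ((m : ℤ) - n) + x.2 (m, n) := by
  have hz : ⇑(matrixEntry m n) ∘ Tvu ∘ zIndex = fun p => if (m : ℤ) - n = p then 1 else 0 := by
    funext p
    simp only [Function.comp_apply, zIndex, matrixEntry_Tvu]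
    exact if_congr (by omega) rfl rfl
  have he : (⇑(matrixEntry m n) ∘ fun s => Tvu s - Tvu (s.1 + 1, s.2 + 1))
      = fun s => if (m, n) = s then 1 else 0 := by
    funext ⟨i, j⟩
    simp only [Function.comp_apply, map_sub, matrixEntry_Tvu, Prod.mk.injEq]
    split_ifs <;> first | (exfalso; omega) | simp
  rw [diagonalExpansion, LinearMap.coprod_apply, map_add, apply_linearCombination,
    apply_linearCombination, hz, he, linearCombination_apply, linearCombination_apply]
  simp only [smul_eq_mul, mul_boole, sum_ite_self_eq]

lemma diagonalExpansion_Tvu_injective : Function.Injective (diagonalExpansion ℂ Tvu) := by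
  rw [← LinearMap.ker_eq_bot, LinearMap.ker_eq_bot']
  rintro ⟨b, am⟩ h
  have hentry (m n : ℕ) : b ((m : ℤ) - n) + am (m, n) = 0 := by
    have := matrixEntry_diagonalExpansion_Tvu m n (b, am)
    rwa [h, map_zero, eq_comm] at this
  have ham (m n : ℕ) (hm : am.support.sup Prod.fst < m) : am (m, n) = 0 := by
    by_contra h0
    exact hm.not_ge (le_sup (f := Prod.fst) (mem_support_iff.mpr h0))
  have hb : b = 0 := by
    ext p
    set T := am.support.sup Prod.fst + 1
    have := hentry (p.toNat + T) ((-p).toNat + T)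
    rwa [ham _ _ (by omega), add_zero,
      show ((p.toNat + T : ℕ) : ℤ) - ((-p).toNat + T : ℕ) = p by omega] at this
  refine Prod.ext hb (Finsupp.ext fun ⟨m, n⟩ => ?_)
  simpa [hb] using hentry m n

def vuWeight (k : ℕ) (s : ℕ × ℕ) : ℝ := (1 + (s.1 : ℝ)) ^ k * (1 + (s.2 : ℝ)) ^ k

def matrixUnitWeight (k : ℕ) (s : ℕ × ℕ) : ℝ := (1 + (s.1 : ℝ) + (s.2 : ℝ)) ^ k

def powerWeight (k : ℕ) (p : ℤ) : ℝ := (1 + (p.natAbs : ℝ)) ^ k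

lemma vuWeight_nonneg (k : ℕ) (s : ℕ × ℕ) : 0 ≤ vuWeight k s := by
  unfold vuWeight; positivity

lemma matrixUnitWeight_nonneg (k : ℕ) (s : ℕ × ℕ) : 0 ≤ matrixUnitWeight k s := by
  unfold matrixUnitWeight; positivity

lemma powerWeight_nonneg (k : ℕ) (p : ℤ) : 0 ≤ powerWeight k p := by
  unfold powerWeight; positivity

lemma matrixUnitWeight_zIndex (k : ℕ) (p : ℤ) :
    matrixUnitWeight k (zIndex p) = powerWeight k p := by
  rw [matrixUnitWeight, powerWeight, zIndex, add_assoc]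
  exact_mod_cast congrArg (fun t : ℕ => (1 + t) ^ k) (by omega : p.toNat + (-p).toNat = p.natAbs)

lemma vuWeight_le_matrixUnitWeight (k : ℕ) (s : ℕ × ℕ) :
    vuWeight k s ≤ matrixUnitWeight (2 * k) s := by
  rw [vuWeight, matrixUnitWeight, ← mul_pow, pow_mul]
  exact pow_le_pow_left₀ (by positivity)
    (by nlinarith [s.1.cast_nonneg (α := ℝ), s.2.cast_nonneg (α := ℝ)]) k

lemma vuWeight_succ_le (k : ℕ) (s : ℕ × ℕ) :
    vuWeight k (s.1 + 1, s.2 + 1) ≤ 4 ^ k * matrixUnitWeight (2 * k) s := by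
  rw [vuWeight, matrixUnitWeight, ← mul_pow, pow_mul, ← mul_pow]
  push_cast
  exact pow_le_pow_left₀ (by positivity)
    (by nlinarith [s.1.cast_nonneg (α := ℝ), s.2.cast_nonneg (α := ℝ)]) k

-- The norms `‖·‖_k` and `‖·‖'_k`, as seminorms on coefficient vectors.
def vuNorm (k : ℕ) : Seminorm ℂ (ℕ × ℕ →₀ ℂ) := weightedL1 (vuWeight k) (vuWeight_nonneg k)

def primedNorm (k : ℕ) : Seminorm ℂ ((ℤ →₀ ℂ) × (ℕ × ℕ →₀ ℂ)) :=
  (weightedL1 (matrixUnitWeight k) (matrixUnitWeight_nonneg k)).comp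
      (LinearMap.snd ℂ (ℤ →₀ ℂ) (ℕ × ℕ →₀ ℂ))
    + (weightedL1 (powerWeight k) (powerWeight_nonneg k)).comp
      (LinearMap.fst ℂ (ℤ →₀ ℂ) (ℕ × ℕ →₀ ℂ))

lemma primedNorm_apply (k : ℕ) (x : (ℤ →₀ ℂ) × (ℕ × ℕ →₀ ℂ)) :
    primedNorm k x = weightedL1 (𝕜 := ℂ) (matrixUnitWeight k) (matrixUnitWeight_nonneg k) x.2
      + weightedL1 (powerWeight k) (powerWeight_nonneg k) x.1 := rfl

lemma primedNorm_toPrimedCoeffs_single_le (k i j : ℕ) :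
    primedNorm k (toPrimedCoeffs ℂ (single (i, j) 1)) ≤ vuWeight (k + 1) (i, j) := by
  set X : ℝ := (1 + i) * (1 + j)
  have hX : 1 + (i : ℝ) + j ≤ X := by nlinarith [i.cast_nonneg (α := ℝ), j.cast_nonneg (α := ℝ)]
  have hz : powerWeight k ((i : ℤ) - j) ≤ X ^ k := by
    refine pow_le_pow_left₀ (by positivity) (le_trans ?_ hX) k
    exact_mod_cast (by omega : 1 + ((i : ℤ) - j).natAbs ≤ 1 + i + j)
  have he (r : ℕ) (hr : r ∈ range (min i j)) :
      matrixUnitWeight k (r + (i - j), r + (j - i)) ≤ X ^ k := by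
    refine pow_le_pow_left₀ (by positivity) (le_trans ?_ hX) k
    have := mem_range.mp hr
    exact_mod_cast (by omega : 1 + (r + (i - j)) + (r + (j - i)) ≤ 1 + i + j)
  calc primedNorm k (toPrimedCoeffs ℂ (single (i, j) 1))
      = weightedL1 (𝕜 := ℂ) (matrixUnitWeight k) (matrixUnitWeight_nonneg k)
          (∑ r ∈ range (min i j), single (r + (i - j), r + (j - i)) 1)
        + powerWeight k ((i : ℤ) - j) := by
        rw [toPrimedCoeffs, linearCombination_single, one_smul]
        dsimp only
        rw [primedNorm_apply, map_neg_eq_map, weightedL1_single, norm_one, one_mul]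
    _ ≤ ∑ r ∈ range (min i j), X ^ k + X ^ k := by
        refine add_le_add ((Seminorm.map_sum_le _ _ _).trans (sum_le_sum fun r hr => ?_)) hz
        rw [weightedL1_single, norm_one, one_mul]
        exact he r hr
    _ = ((min i j : ℕ) + 1) * X ^ k := by rw [sum_const, card_range, nsmul_eq_mul]; ring
    _ ≤ X * X ^ k := by
        refine mul_le_mul_of_nonneg_right (le_trans ?_ hX) (by positivity)
        exact_mod_cast (by omega : min i j + 1 ≤ 1 + i + j)
    _ = vuWeight (k + 1) (i, j) := by rw [vuWeight, ← mul_pow, pow_succ']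

lemma primedNorm_toPrimedCoeffs_le (k : ℕ) (c : ℕ × ℕ →₀ ℂ) :
    primedNorm k (toPrimedCoeffs ℂ c) ≤ vuNorm (k + 1) c := by
  have := (primedNorm k).map_le_weightedL1 (toPrimedCoeffs ℂ) (vuWeight_nonneg (k + 1)) (C := 1)
    (fun s => (primedNorm_toPrimedCoeffs_single_le k s.1 s.2).trans_eq (one_mul _).symm) c
  rwa [one_mul] at this

lemma vuNorm_diagonalExpansion_single_le (k : ℕ) (x : (ℤ →₀ ℂ) × (ℕ × ℕ →₀ ℂ)) :
    vuNorm k (diagonalExpansion ℂ (fun s => single s 1) x)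
      ≤ (4 ^ k + 1) * primedNorm (2 * k) x := by
  have h4 : (0 : ℝ) ≤ 4 ^ k := by positivity
  rw [diagonalExpansion, LinearMap.coprod_apply, primedNorm_apply, mul_add, add_comm (_ * _)]
  refine (map_add_le_add _ _ _).trans (add_le_add ?_ ?_)
  · refine (vuNorm k).map_le_weightedL1 _ (powerWeight_nonneg _) (fun p => ?_) x.1
    rw [linearCombination_single, one_smul, Function.comp_apply, vuNorm, weightedL1_single,
      norm_one, one_mul, ← matrixUnitWeight_zIndex]
    exact (vuWeight_le_matrixUnitWeight k _).trans
      (le_mul_of_one_le_left (matrixUnitWeight_nonneg _ _) (by linarith))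
  · refine (vuNorm k).map_le_weightedL1 _ (matrixUnitWeight_nonneg _) (fun s => ?_) x.2
    rw [linearCombination_single, one_smul]
    calc vuNorm k (single s 1 - single (s.1 + 1, s.2 + 1) 1)
        ≤ vuWeight k s + vuWeight k (s.1 + 1, s.2 + 1) := by
          refine (map_sub_le_add _ _ _).trans_eq ?_
          rw [vuNorm, weightedL1_single, weightedL1_single, norm_one, one_mul, one_mul]
      _ ≤ matrixUnitWeight (2 * k) s + 4 ^ k * matrixUnitWeight (2 * k) s :=
          add_le_add (vuWeight_le_matrixUnitWeight k s) (vuWeight_succ_le k s)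
      _ = (4 ^ k + 1) * matrixUnitWeight (2 * k) s := by ring

end

/-- Compare the norms `‖a‖_k = Σ |c_{ij}| (1+i)^k (1+j)^k` (coefficients in the basis
`v^i u^j`) and `‖a‖'_k = Σ |a_{ij}| (1+i+j)^k + Σ |b_p| (1+|p|)^k` (coefficients in the
basis `1, v^p, u^p, e_{i,j}`) of an element `a` of the algebraic Toeplitz algebra:
`‖a‖'_k ≤ ‖a‖_{k+1}` and `‖a‖_k ≤ (4^k + 1) ‖a‖'_{2k}`.  In particular the two
families of norms are equivalent. -/
theorem stmt14 (k : ℕ) (a : Talg) (c : ℕ × ℕ →₀ ℂ) (b : ℤ →₀ ℂ) (am : ℕ × ℕ →₀ ℂ)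
    (h1 : a = c.sum fun ij x => x • (Tv ^ ij.1 * Tu ^ ij.2))
    (h2 : a = (b.sum fun p x => x • Tz p) + am.sum fun ij x => x • Te ij.1 ij.2) :
    ((am.sum fun ij x => ‖x‖ * (1 + (ij.1 : ℝ) + (ij.2 : ℝ)) ^ k)
        + b.sum fun p x => ‖x‖ * (1 + (p.natAbs : ℝ)) ^ k)
      ≤ (c.sum fun ij x =>
          ‖x‖ * ((1 + (ij.1 : ℝ)) ^ (k + 1) * (1 + (ij.2 : ℝ)) ^ (k + 1))) ∧
    (c.sum fun ij x => ‖x‖ * ((1 + (ij.1 : ℝ)) ^ k * (1 + (ij.2 : ℝ)) ^ k))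
      ≤ (4 ^ k + 1) *
        ((am.sum fun ij x => ‖x‖ * (1 + (ij.1 : ℝ) + (ij.2 : ℝ)) ^ (2 * k))
          + b.sum fun p x => ‖x‖ * (1 + (p.natAbs : ℝ)) ^ (2 * k)) := by
  have hcoeffs : toPrimedCoeffs ℂ c = (b, am) := diagonalExpansion_Tvu_injective <| by
    rw [diagonalExpansion_toPrimedCoeffs, diagonalExpansion_Tvu, ← h2, h1, linearCombination_apply]
    rfl
  have hc : diagonalExpansion ℂ (fun s => single s 1) (b, am) = c := by
    rw [← hcoeffs, diagonalExpansion_single_toPrimedCoeffs]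
  constructor
  · have := primedNorm_toPrimedCoeffs_le k c
    rw [hcoeffs] at this
    exact this
  · have := vuNorm_diagonalExpansion_single_le k (b, am)
    rw [hc] at this
    exact this
end

section
/- The two families of norms {‖·‖_k : k ≥ 1} and {‖·‖'_k : k ≥ 1} on T_alg are equivalent, where, writing a ∈ T_alg uniquely as a finite sum a = Σ_{i,j} c_{ij} v^i u^j, one sets ‖a‖_k := Σ_{i,j} |c_{ij}| k^{i+j}; and writing a uniquely as a finite sum a = b_0·1 + Σ_{p≥1} b_p v^p + Σ_{p≥1} b_{−p} u^p + Σ_{i,j} a_{ij} e_{i,j}, one sets ‖a‖'_k := Σ_{i,j} |a_{ij}| k^{i+j} + Σ_{p∈ℤ} |b_p| k^{|p|}. That is: for every k ≥ 1 there exist k' ≥ 1 and C > 0 with ‖a‖'_k ≤ C ‖a‖_{k'} for all a ∈ T_alg, and for every k ≥ 1 there exist k'' ≥ 1 and C' > 0 with ‖a‖_k ≤ C' ‖a‖'_{k''} for all a ∈ T_alg. -/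
/-- The norm `‖a‖_k = Σ |c_{ij}| k^{i+j}` computed from the coefficients of `a`
in the basis `v^i u^j`. -/
noncomputable def geomNorm (k : ℕ) (c : ℕ × ℕ →₀ ℂ) : ℝ :=
  c.sum fun ij x => ‖x‖ * (k : ℝ) ^ (ij.1 + ij.2)

/-- The norm `‖a‖'_k = Σ |a_{ij}| k^{i+j} + Σ_{p ∈ ℤ} |b_p| k^{|p|}` computed from the
coefficients of `a` in the basis `1, v^p (p ≥ 1), u^p (p ≥ 1), e_{i,j}`. -/
noncomputable def geomNorm' (k : ℕ) (b : ℤ →₀ ℂ) (am : ℕ × ℕ →₀ ℂ) : ℝ :=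
  (am.sum fun ij x => ‖x‖ * (k : ℝ) ^ (ij.1 + ij.2))
    + b.sum fun p x => ‖x‖ * (k : ℝ) ^ p.natAbs

-- auxiliary representation theory

noncomputable def Uop : Module.End ℂ (ℕ →₀ ℂ) :=
  Finsupp.lcomapDomain (fun n => n + 1) (fun a b h => by simpa using h)
noncomputable def Vop : Module.End ℂ (ℕ →₀ ℂ) := Finsupp.lmapDomain ℂ ℂ (fun n => n + 1)

lemma Uop_apply (g : ℕ →₀ ℂ) (n : ℕ) : Uop g n = g (n + 1) := rfl

lemma Vop_apply (g : ℕ →₀ ℂ) (n : ℕ) :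
    Vop g n = if 1 ≤ n then g (n - 1) else 0 := by
  rcases n with _ | m
  · rw [if_neg (by omega : ¬ (1:ℕ) ≤ 0)]
    exact Finsupp.mapDomain_notin_range _ _ (by simp)
  · rw [if_pos (by omega : 1 ≤ m + 1)]
    have := Finsupp.mapDomain_apply (f := fun n => n + 1) (fun a b h => by simpa using h) g m
    simp only [add_tsub_cancel_right]
    exact this

lemma UV : Uop * Vop = 1 := by
  apply LinearMap.ext; intro g
  ext n
  show Uop (Vop g) n = g n
  rw [Uop_apply, Vop_apply]
  simp

noncomputable def ρ : Talg →ₐ[ℂ] Module.End ℂ (ℕ →₀ ℂ) :=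
  RingQuot.liftAlgHom ℂ ⟨FreeAlgebra.lift ℂ (fun b => if b then Vop else Uop), by
    intro x y h
    cases h
    simp [UV]⟩

lemma ρ_u : ρ Tu = Uop := by
  rw [Tu, ρ, RingQuot.liftAlgHom_mkAlgHom_apply]
  simp

lemma ρ_v : ρ Tv = Vop := by
  rw [Tv, ρ, RingQuot.liftAlgHom_mkAlgHom_apply]
  simp

lemma Uop_pow_apply (j : ℕ) (g : ℕ →₀ ℂ) (n : ℕ) : ((Uop ^ j) g) n = g (n + j) := by
  induction j generalizing g n with
  | zero => simp
  | succ j ih =>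
    rw [pow_succ]
    show ((Uop ^ j) (Uop g)) n = _
    rw [ih, Uop_apply]
    exact congrArg g (by omega)

lemma Vop_pow_apply (i : ℕ) (g : ℕ →₀ ℂ) (n : ℕ) :
    ((Vop ^ i) g) n = if i ≤ n then g (n - i) else 0 := by
  induction i generalizing g n with
  | zero => simp
  | succ i ih =>
    rw [pow_succ]
    show ((Vop ^ i) (Vop g)) n = _
    rw [ih]
    split_ifs with h1 h2 h2
    · rw [Vop_apply, if_pos (by omega : 1 ≤ n - i)]
      exact congrArg g (by omega)
    · rw [Vop_apply, if_neg (by omega : ¬ 1 ≤ n - i)]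
    · omega
    · rfl

lemma evVU (i j n m : ℕ) :
    (ρ (Tv ^ i * Tu ^ j) (Finsupp.single n 1)) m
      = if i + n = m + j ∧ j ≤ n then 1 else 0 := by
  rw [map_mul, map_pow, map_pow, ρ_u, ρ_v]
  show ((Vop ^ i) ((Uop ^ j) (Finsupp.single n 1))) m = _
  rw [Vop_pow_apply]
  by_cases h : i ≤ m
  · rw [if_pos h, Uop_pow_apply, Finsupp.single_apply]
    split_ifs <;> first | rfl | omega
  · rw [if_neg h, eq_comm, if_neg (by omega)]

lemma evZ (p : ℤ) (n m : ℕ) :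
    (ρ (Tz p) (Finsupp.single n 1)) m = if (m : ℤ) = n + p then 1 else 0 := by
  rw [Tz]
  by_cases h : 0 ≤ p
  · rw [if_pos h]
    have := evVU p.toNat 0 n m
    rw [pow_zero, mul_one] at this
    rw [this]
    split_ifs <;> first | rfl | omega
  · rw [if_neg h]
    have := evVU 0 (-p).toNat n m
    rw [pow_zero, one_mul] at this
    rw [this]
    split_ifs <;> first | rfl | omega

lemma Te_eq (i j : ℕ) : Te i j = Tv ^ i * Tu ^ j - Tv ^ (i + 1) * Tu ^ (j + 1) := by
  rw [Te, mul_sub, mul_one, sub_mul]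
  congr 1
  rw [pow_succ, pow_succ']
  simp only [mul_assoc]

lemma evE (i j n m : ℕ) :
    (ρ (Te i j) (Finsupp.single n 1)) m = if n = j ∧ m = i then 1 else 0 := by
  rw [Te_eq, map_sub, LinearMap.sub_apply, Finsupp.sub_apply, evVU, evVU]
  split_ifs <;> first | omega | norm_num

lemma finsupp_sum_ind {α : Type*} [DecidableEq α] (f : α →₀ ℂ) (q : α) :
    (f.sum fun x v => if x = q then v else 0) = f q := by
  rw [Finsupp.sum, Finset.sum_ite_eq' f.support q (fun x => f x)]
  split_ifs with h
  · rfl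
  · exact (Finsupp.notMem_support_iff.mp h).symm

lemma ev_sum {α : Type*} (f : α →₀ ℂ) (W : α → Talg) (n m : ℕ) :
    ((ρ (f.sum fun p x => x • W p)) (Finsupp.single n 1)) m
      = f.sum fun p x => x * (((ρ (W p)) (Finsupp.single n 1)) m) := by
  rw [map_finsuppSum]
  simp only [map_smul]
  rw [Finsupp.sum, Finsupp.sum, LinearMap.coe_sum, Finset.sum_apply,
    Finsupp.finset_sum_apply]
  simp

lemma fs_congr {α : Type*} (f : α →₀ ℂ) {g₁ g₂ : α → ℂ → ℂ}
    (h : ∀ x ∈ f.support, g₁ x (f x) = g₂ x (f x)) : f.sum g₁ = f.sum g₂ :=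
  Finset.sum_congr rfl h

lemma key (c : ℕ × ℕ →₀ ℂ) (b : ℤ →₀ ℂ) (am : ℕ × ℕ →₀ ℂ)
    (h : (c.sum fun ij x => x • (Tv ^ ij.1 * Tu ^ ij.2))
      = ((b.sum fun p x => x • Tz p) + am.sum fun ij x => x • Te ij.1 ij.2))
    (n m : ℕ) :
    (c.sum fun ij x => if ij.1 + n = m + ij.2 ∧ ij.2 ≤ n then x else 0)
      = b ((m : ℤ) - n) + am (m, n) := by
  have h2 := congrArg (fun t => ((ρ t) (Finsupp.single n 1)) m) h
  simp only [map_add, LinearMap.add_apply, Finsupp.add_apply, ev_sum, evVU, evZ, evE,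
    mul_ite, mul_one, mul_zero] at h2
  rw [h2]
  congr 1
  · rw [fs_congr b (g₂ := fun p x => if p = (m : ℤ) - n then x else 0)
      (fun p _ => by
        have hiff : ((m : ℤ) = n + p) ↔ (p = (m : ℤ) - n) := by omega
        simp only [hiff])]
    exact finsupp_sum_ind b _
  · rw [fs_congr am (g₂ := fun ij x => if ij = (m, n) then x else 0)
      (fun ij _ => by
        have hiff : (n = ij.2 ∧ m = ij.1) ↔ (ij = (m, n)) := by
          rw [Prod.ext_iff]; omega
        simp only [hiff])]
    exact finsupp_sum_ind am _

lemma bval (c : ℕ × ℕ →₀ ℂ) (b : ℤ →₀ ℂ) (am : ℕ × ℕ →₀ ℂ)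
    (h : (c.sum fun ij x => x • (Tv ^ ij.1 * Tu ^ ij.2))
      = ((b.sum fun p x => x • Tz p) + am.sum fun ij x => x • Te ij.1 ij.2))
    (p : ℤ) :
    b p = c.sum fun ij x => if (ij.1 : ℤ) - ij.2 = p then x else 0 := by
  set S1 := c.support.sup (fun ij => ij.2) with hS1
  set S2 := am.support.sup (fun ij => ij.2) with hS2
  set n := S1 + S2 + 1 + p.natAbs with hn
  set m := ((n : ℤ) + p).toNat with hm
  have hmn : (m : ℤ) = (n : ℤ) + p := by
    rw [hm, Int.toNat_of_nonneg (by omega)]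
  have ham : am (m, n) = 0 := by
    by_contra hmem
    have hle : n ≤ S2 :=
      Finset.le_sup (f := fun ij : ℕ × ℕ => ij.2) (Finsupp.mem_support_iff.mpr hmem)
    omega
  have hkey := key c b am h n m
  rw [ham, add_zero] at hkey
  have hp : (m : ℤ) - n = p := by omega
  rw [hp] at hkey
  rw [← hkey]
  apply fs_congr
  intro ij hij
  have hj : ij.2 ≤ S1 := Finset.le_sup (f := fun ij : ℕ × ℕ => ij.2) hij
  have hiff : ((ij.1 : ℤ) - ij.2 = p) ↔ (ij.1 + n = m + ij.2 ∧ ij.2 ≤ n) := by omega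
  simp only [hiff]

lemma amval (c : ℕ × ℕ →₀ ℂ) (b : ℤ →₀ ℂ) (am : ℕ × ℕ →₀ ℂ)
    (h : (c.sum fun ij x => x • (Tv ^ ij.1 * Tu ^ ij.2))
      = ((b.sum fun p x => x • Tz p) + am.sum fun ij x => x • Te ij.1 ij.2))
    (s t : ℕ) :
    am (s, t) = c.sum fun ij x =>
      if (ij.1 : ℤ) - ij.2 = (s : ℤ) - t ∧ t < ij.2 then -x else 0 := by
  have hkey := key c b am h t s
  have hb := bval c b am h ((s : ℤ) - t)
  have heq : am (s, t) =
      (c.sum fun ij x => if ij.1 + t = s + ij.2 ∧ ij.2 ≤ t then x else 0)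
        - (c.sum fun ij x => if (ij.1 : ℤ) - ij.2 = (s : ℤ) - t then x else 0) := by
    rw [hkey, ← hb]; ring
  rw [heq, ← Finsupp.sum_sub]
  apply fs_congr
  intro ij hij
  by_cases h1 : (ij.1 : ℤ) - ij.2 = (s : ℤ) - t
  · by_cases h2 : t < ij.2
    · rw [if_neg (by omega), if_pos h1, if_pos ⟨h1, h2⟩]; ring
    · rw [if_pos (by omega), if_pos h1, if_neg (by omega)]; ring
  · rw [if_neg (by omega), if_neg h1, if_neg (fun hc => h1 hc.1)]; ring

lemma cval1 (c : ℕ × ℕ →₀ ℂ) (b : ℤ →₀ ℂ) (am : ℕ × ℕ →₀ ℂ)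
    (h : (c.sum fun ij x => x • (Tv ^ ij.1 * Tu ^ ij.2))
      = ((b.sum fun p x => x • Tz p) + am.sum fun ij x => x • Te ij.1 ij.2))
    (s t : ℕ) (hs : 1 ≤ s) (ht : 1 ≤ t) :
    c (s, t) = am (s, t) - am (s - 1, t - 1) := by
  have k1 := key c b am h t s
  have k2 := key c b am h (t - 1) (s - 1)
  have hbe : b (((s - 1 : ℕ) : ℤ) - ((t - 1 : ℕ) : ℤ)) = b ((s : ℤ) - t) :=
    congrArg b (by omega)
  rw [hbe] at k2
  calc c (s, t) = c.sum (fun ij x => if ij = (s, t) then x else 0) :=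
        (finsupp_sum_ind c (s, t)).symm
    _ = c.sum (fun ij x =>
          (if ij.1 + t = s + ij.2 ∧ ij.2 ≤ t then x else 0)
            - (if ij.1 + (t - 1) = (s - 1) + ij.2 ∧ ij.2 ≤ t - 1 then x else 0)) := by
        apply fs_congr
        intro ij hij
        have hiff : (ij = (s, t)) ↔ (ij.1 = s ∧ ij.2 = t) := Prod.ext_iff
        by_cases he : ij.1 = s ∧ ij.2 = t
        · rw [if_pos (hiff.mpr he), if_pos (by omega), if_neg (by omega)]; ring
        · rw [if_neg (fun hc => he (hiff.mp hc))]
          by_cases h1 : ij.1 + t = s + ij.2 ∧ ij.2 ≤ t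
          · rw [if_pos h1, if_pos (by omega)]; ring
          · rw [if_neg h1, if_neg (by omega)]; ring
    _ = _ := by rw [Finsupp.sum_sub, k1, k2]; ring

lemma cval0 (c : ℕ × ℕ →₀ ℂ) (b : ℤ →₀ ℂ) (am : ℕ × ℕ →₀ ℂ)
    (h : (c.sum fun ij x => x • (Tv ^ ij.1 * Tu ^ ij.2))
      = ((b.sum fun p x => x • Tz p) + am.sum fun ij x => x • Te ij.1 ij.2))
    (s t : ℕ) (hst : s = 0 ∨ t = 0) :
    c (s, t) = b ((s : ℤ) - t) + am (s, t) := by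
  have k1 := key c b am h t s
  rw [← k1, ← finsupp_sum_ind c (s, t)]
  apply fs_congr
  intro ij hij
  have hiff : (ij = (s, t)) ↔ (ij.1 + t = s + ij.2 ∧ ij.2 ≤ t) := by
    rw [Prod.ext_iff]; omega
  simp only [hiff]

lemma sum_le_over_support {α : Type*} [DecidableEq α] (s t : Finset α) (g : α → ℝ)
    (h0 : ∀ x, x ∉ t → g x = 0) (hnn : ∀ x, 0 ≤ g x) :
    ∑ x ∈ s, g x ≤ ∑ x ∈ t, g x := by
  have h1 : ∑ x ∈ s ∩ t, g x = ∑ x ∈ s, g x :=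
    Finset.sum_subset Finset.inter_subset_left
      (fun x hx hnx => h0 x (fun hxt => hnx (Finset.mem_inter.mpr ⟨hx, hxt⟩)))
  rw [← h1]
  exact Finset.sum_le_sum_of_subset_of_nonneg Finset.inter_subset_right
    (fun x _ _ => hnn x)

lemma geomNorm_mono (k1 k2 : ℕ) (hk : k1 ≤ k2) (c : ℕ × ℕ →₀ ℂ) :
    geomNorm k1 c ≤ geomNorm k2 c := by
  apply Finset.sum_le_sum
  intro ij _
  have : ((k1 : ℝ)) ^ (ij.1 + ij.2) ≤ (k2 : ℝ) ^ (ij.1 + ij.2) :=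
    pow_le_pow_left₀ (by positivity) (by exact_mod_cast hk) _
  exact mul_le_mul_of_nonneg_left this (norm_nonneg _)

lemma part1a (k : ℕ) (hk : 1 ≤ k) (c : ℕ × ℕ →₀ ℂ) (b : ℤ →₀ ℂ) (am : ℕ × ℕ →₀ ℂ)
    (h : (c.sum fun ij x => x • (Tv ^ ij.1 * Tu ^ ij.2))
      = ((b.sum fun p x => x • Tz p) + am.sum fun ij x => x • Te ij.1 ij.2)) :
    (b.sum fun p x => ‖x‖ * (k : ℝ) ^ p.natAbs) ≤ geomNorm k c := by
  classical
  set F : ℤ → Finset (ℕ × ℕ) :=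
    fun p => c.support.filter (fun ij => (ij.1 : ℤ) - ij.2 = p) with hF
  have hterm : ∀ p ∈ b.support, ‖b p‖ * (k : ℝ) ^ p.natAbs
      ≤ ∑ ij ∈ F p, ‖c ij‖ * (k : ℝ) ^ (ij.1 + ij.2) := by
    intro p _
    have h1 : b p = ∑ ij ∈ F p, c ij := by
      rw [bval c b am h p, Finsupp.sum, Finset.sum_filter]
    calc ‖b p‖ * (k : ℝ) ^ p.natAbs
        ≤ (∑ ij ∈ F p, ‖c ij‖) * (k : ℝ) ^ p.natAbs := by
          apply mul_le_mul_of_nonneg_right _ (by positivity)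
          rw [h1]
          exact norm_sum_le _ _
      _ = ∑ ij ∈ F p, ‖c ij‖ * (k : ℝ) ^ p.natAbs := Finset.sum_mul _ _ _
      _ ≤ ∑ ij ∈ F p, ‖c ij‖ * (k : ℝ) ^ (ij.1 + ij.2) := by
          apply Finset.sum_le_sum
          intro ij hij
          rw [hF, Finset.mem_filter] at hij
          apply mul_le_mul_of_nonneg_left _ (norm_nonneg _)
          apply pow_le_pow_right₀ (by exact_mod_cast hk)
          omega
  have hdisj : (b.support : Set ℤ).PairwiseDisjoint F := by
    intro p _ q _ hpq
    apply Finset.disjoint_left.mpr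
    intro ij h1 h2
    rw [hF, Finset.mem_filter] at h1 h2
    exact hpq (h1.2 ▸ h2.2)
  calc (b.sum fun p x => ‖x‖ * (k : ℝ) ^ p.natAbs)
      ≤ ∑ p ∈ b.support, ∑ ij ∈ F p, ‖c ij‖ * (k : ℝ) ^ (ij.1 + ij.2) :=
        Finset.sum_le_sum hterm
    _ = ∑ ij ∈ b.support.biUnion F, ‖c ij‖ * (k : ℝ) ^ (ij.1 + ij.2) :=
        (Finset.sum_biUnion hdisj).symm
    _ ≤ ∑ ij ∈ c.support, ‖c ij‖ * (k : ℝ) ^ (ij.1 + ij.2) :=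
        Finset.sum_le_sum_of_subset_of_nonneg
          (Finset.biUnion_subset.mpr (fun p _ => Finset.filter_subset _ _))
          (fun ij _ _ => by positivity)
    _ = geomNorm k c := rfl

lemma part1b (k : ℕ) (hk : 1 ≤ k) (c : ℕ × ℕ →₀ ℂ) (b : ℤ →₀ ℂ) (am : ℕ × ℕ →₀ ℂ)
    (h : (c.sum fun ij x => x • (Tv ^ ij.1 * Tu ^ ij.2))
      = ((b.sum fun p x => x • Tz p) + am.sum fun ij x => x • Te ij.1 ij.2)) :
    (am.sum fun st x => ‖x‖ * (k : ℝ) ^ (st.1 + st.2)) ≤ geomNorm (2 * k) c := by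
  classical
  set P : ℕ × ℕ → ℕ × ℕ → Prop :=
    fun st ij => (ij.1 : ℤ) - ij.2 = (st.1 : ℤ) - st.2 ∧ st.2 < ij.2 with hP
  have hterm : ∀ st ∈ am.support, ‖am st‖ * (k : ℝ) ^ (st.1 + st.2)
      ≤ ∑ ij ∈ c.support,
          (if P st ij then ‖c ij‖ * (k : ℝ) ^ (ij.1 + ij.2) else 0) := by
    intro st _
    have h1 : am st = ∑ ij ∈ c.support.filter (P st), -(c ij) := by
      conv_lhs => rw [show st = (st.1, st.2) from rfl]
      rw [amval c b am h st.1 st.2, Finsupp.sum, Finset.sum_filter]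
    calc ‖am st‖ * (k : ℝ) ^ (st.1 + st.2)
        ≤ (∑ ij ∈ c.support.filter (P st), ‖c ij‖) * (k : ℝ) ^ (st.1 + st.2) := by
          apply mul_le_mul_of_nonneg_right _ (by positivity)
          rw [h1]
          refine (norm_sum_le _ _).trans (le_of_eq ?_)
          exact Finset.sum_congr rfl (fun ij _ => norm_neg _)
      _ = ∑ ij ∈ c.support.filter (P st), ‖c ij‖ * (k : ℝ) ^ (st.1 + st.2) :=
          Finset.sum_mul _ _ _
      _ ≤ ∑ ij ∈ c.support.filter (P st), ‖c ij‖ * (k : ℝ) ^ (ij.1 + ij.2) := by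
          apply Finset.sum_le_sum
          intro ij hij
          rw [Finset.mem_filter, hP] at hij
          apply mul_le_mul_of_nonneg_left _ (norm_nonneg _)
          apply pow_le_pow_right₀ (by exact_mod_cast hk)
          omega
      _ = ∑ ij ∈ c.support,
            (if P st ij then ‖c ij‖ * (k : ℝ) ^ (ij.1 + ij.2) else 0) :=
          (Finset.sum_filter _ _)
  have hcard : ∀ ij : ℕ × ℕ,
      (am.support.filter (fun st => P st ij)).card ≤ ij.2 := by
    intro ij
    have := Finset.card_le_card_of_injOn (f := fun st : ℕ × ℕ => st.2)
      (s := am.support.filter (fun st => P st ij)) (t := Finset.range ij.2)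
      (by intro st hst
          rw [Finset.mem_coe, Finset.mem_filter, hP] at hst
          exact Finset.mem_range.mpr hst.2.2)
      (by intro s1 h1 s2 h2 heq
          simp only [Finset.mem_coe, Finset.mem_filter, hP] at h1 h2
          have heq' : s1.2 = s2.2 := heq
          have h1' := h1.2.1
          have h2' := h2.2.1
          exact Prod.ext_iff.mpr ⟨by omega, heq'⟩)
    simpa using this
  calc (am.sum fun st x => ‖x‖ * (k : ℝ) ^ (st.1 + st.2))
      ≤ ∑ st ∈ am.support, ∑ ij ∈ c.support,
          (if P st ij then ‖c ij‖ * (k : ℝ) ^ (ij.1 + ij.2) else 0) :=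
        Finset.sum_le_sum hterm
    _ = ∑ ij ∈ c.support, ∑ st ∈ am.support,
          (if P st ij then ‖c ij‖ * (k : ℝ) ^ (ij.1 + ij.2) else 0) :=
        Finset.sum_comm
    _ ≤ ∑ ij ∈ c.support, ‖c ij‖ * ((2 * k : ℕ) : ℝ) ^ (ij.1 + ij.2) := by
        apply Finset.sum_le_sum
        intro ij _
        rw [← Finset.sum_filter, Finset.sum_const, nsmul_eq_mul]
        have hle : ((am.support.filter (fun st => P st ij)).card : ℝ)
            ≤ 2 ^ (ij.1 + ij.2) := by
          have h3 : (am.support.filter (fun st => P st ij)).card ≤ 2 ^ (ij.1 + ij.2) :=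
            le_trans (hcard ij) (le_trans (by omega) Nat.lt_two_pow_self.le)
          exact_mod_cast h3
        calc ((am.support.filter (fun st => P st ij)).card : ℝ)
              * (‖c ij‖ * (k : ℝ) ^ (ij.1 + ij.2))
            = ‖c ij‖ * (((am.support.filter (fun st => P st ij)).card : ℝ)
                * (k : ℝ) ^ (ij.1 + ij.2)) := by ring
          _ ≤ ‖c ij‖ * ((2 : ℝ) ^ (ij.1 + ij.2) * (k : ℝ) ^ (ij.1 + ij.2)) :=
              mul_le_mul_of_nonneg_left
                (mul_le_mul_of_nonneg_right hle (by positivity)) (norm_nonneg _)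
          _ = ‖c ij‖ * ((2 * k : ℕ) : ℝ) ^ (ij.1 + ij.2) := by push_cast; ring
    _ = geomNorm (2 * k) c := rfl

lemma part2 (k : ℕ) (hk : 1 ≤ k) (c : ℕ × ℕ →₀ ℂ) (b : ℤ →₀ ℂ) (am : ℕ × ℕ →₀ ℂ)
    (h : (c.sum fun ij x => x • (Tv ^ ij.1 * Tu ^ ij.2))
      = ((b.sum fun p x => x • Tz p) + am.sum fun ij x => x • Te ij.1 ij.2)) :
    geomNorm k c ≤ (2 + (k : ℝ) ^ 2) * geomNorm' k b am := by
  classical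
  set gam : ℕ × ℕ → ℝ := fun st => ‖am st‖ * (k : ℝ) ^ (st.1 + st.2) with hgam
  set gb : ℤ → ℝ := fun p => ‖b p‖ * (k : ℝ) ^ p.natAbs with hgb
  have hgam0 : ∀ st, st ∉ am.support → gam st = 0 := by
    intro st hst
    rw [hgam]
    simp [Finsupp.notMem_support_iff.mp hst]
  have hgamnn : ∀ st, 0 ≤ gam st := fun st => by positivity
  have hgb0 : ∀ p, p ∉ b.support → gb p = 0 := by
    intro p hp
    rw [hgb]
    simp [Finsupp.notMem_support_iff.mp hp]
  have hgbnn : ∀ p, 0 ≤ gb p := fun p => by positivity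
  set Sam := ∑ st ∈ am.support, gam st with hSam
  set Sb := ∑ p ∈ b.support, gb p with hSb
  have hSamnn : 0 ≤ Sam := Finset.sum_nonneg (fun st _ => hgamnn st)
  have hSbnn : 0 ≤ Sb := Finset.sum_nonneg (fun p _ => hgbnn p)
  set Q : ℕ × ℕ → Prop := fun st => 1 ≤ st.1 ∧ 1 ≤ st.2 with hQ
  set A := c.support.filter Q with hA
  set B := c.support.filter (fun st => ¬ Q st) with hB
  have hsplit : geomNorm k c
      = (∑ st ∈ A, ‖c st‖ * (k : ℝ) ^ (st.1 + st.2))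
        + ∑ st ∈ B, ‖c st‖ * (k : ℝ) ^ (st.1 + st.2) :=
    (Finset.sum_filter_add_sum_filter_not _ _ _).symm
  -- A part
  have hA1 : (∑ st ∈ A, ‖c st‖ * (k : ℝ) ^ (st.1 + st.2))
      ≤ (∑ st ∈ A, gam st)
        + ∑ st ∈ A, ‖am (st.1 - 1, st.2 - 1)‖ * (k : ℝ) ^ (st.1 + st.2) := by
    rw [← Finset.sum_add_distrib]
    apply Finset.sum_le_sum
    intro st hst
    rw [hA, Finset.mem_filter, hQ] at hst
    have hc : c (st.1, st.2) = am (st.1, st.2) - am (st.1 - 1, st.2 - 1) :=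
      cval1 c b am h st.1 st.2 hst.2.1 hst.2.2
    have : ‖c st‖ ≤ ‖am st‖ + ‖am (st.1 - 1, st.2 - 1)‖ := by
      rw [show st = (st.1, st.2) from rfl, hc]
      exact norm_sub_le _ _
    calc ‖c st‖ * (k : ℝ) ^ (st.1 + st.2)
        ≤ (‖am st‖ + ‖am (st.1 - 1, st.2 - 1)‖) * (k : ℝ) ^ (st.1 + st.2) :=
          mul_le_mul_of_nonneg_right this (by positivity)
      _ = gam st + ‖am (st.1 - 1, st.2 - 1)‖ * (k : ℝ) ^ (st.1 + st.2) := by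
          rw [hgam]; ring
  have hA2 : (∑ st ∈ A, gam st) ≤ Sam :=
    sum_le_over_support _ _ _ hgam0 hgamnn
  have hA3 : (∑ st ∈ A, ‖am (st.1 - 1, st.2 - 1)‖ * (k : ℝ) ^ (st.1 + st.2))
      ≤ (k : ℝ) ^ 2 * Sam := by
    have e1 : (∑ st ∈ A, ‖am (st.1 - 1, st.2 - 1)‖ * (k : ℝ) ^ (st.1 + st.2))
        = ∑ st ∈ A, (k : ℝ) ^ 2 * gam (st.1 - 1, st.2 - 1) := by
      apply Finset.sum_congr rfl
      intro st hst
      rw [hA, Finset.mem_filter, hQ] at hst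
      rw [hgam]
      have : st.1 + st.2 = (st.1 - 1) + (st.2 - 1) + 2 := by omega
      rw [this, pow_add]
      ring
    rw [e1, ← Finset.mul_sum]
    apply mul_le_mul_of_nonneg_left _ (by positivity)
    have e2 : (∑ st ∈ A, gam (st.1 - 1, st.2 - 1))
        = ∑ y ∈ A.image (fun st : ℕ × ℕ => (st.1 - 1, st.2 - 1)), gam y := by
      rw [Finset.sum_image]
      intro x hx y hy hxy
      rw [hA, Finset.mem_coe, Finset.mem_filter, hQ] at hx hy
      have h1 := congrArg Prod.fst hxy
      have h2 := congrArg Prod.snd hxy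
      simp only at h1 h2
      exact Prod.ext_iff.mpr ⟨by omega, by omega⟩
    rw [e2]
    exact sum_le_over_support _ _ _ hgam0 hgamnn
  -- B part
  have hB1 : (∑ st ∈ B, ‖c st‖ * (k : ℝ) ^ (st.1 + st.2))
      ≤ (∑ st ∈ B, gb ((st.1 : ℤ) - st.2)) + ∑ st ∈ B, gam st := by
    rw [← Finset.sum_add_distrib]
    apply Finset.sum_le_sum
    intro st hst
    rw [hB, Finset.mem_filter, hQ] at hst
    have hst0 : st.1 = 0 ∨ st.2 = 0 := by omega
    have hc : c (st.1, st.2) = b ((st.1 : ℤ) - st.2) + am (st.1, st.2) :=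
      cval0 c b am h st.1 st.2 hst0
    have hnorm : ‖c st‖ ≤ ‖b ((st.1 : ℤ) - st.2)‖ + ‖am st‖ := by
      rw [show st = (st.1, st.2) from rfl, hc]
      exact norm_add_le _ _
    have habs : ((st.1 : ℤ) - st.2).natAbs = st.1 + st.2 := by omega
    calc ‖c st‖ * (k : ℝ) ^ (st.1 + st.2)
        ≤ (‖b ((st.1 : ℤ) - st.2)‖ + ‖am st‖) * (k : ℝ) ^ (st.1 + st.2) :=
          mul_le_mul_of_nonneg_right hnorm (by positivity)
      _ = gb ((st.1 : ℤ) - st.2) + gam st := by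
          rw [hgb, hgam]
          simp only [habs]
          ring
  have hB2 : (∑ st ∈ B, gb ((st.1 : ℤ) - st.2)) ≤ Sb := by
    have e2 : (∑ st ∈ B, gb ((st.1 : ℤ) - st.2))
        = ∑ p ∈ B.image (fun st : ℕ × ℕ => (st.1 : ℤ) - st.2), gb p := by
      rw [Finset.sum_image]
      intro x hx y hy hxy
      rw [hB, Finset.mem_coe, Finset.mem_filter, hQ] at hx hy
      have hx2 := hx.2
      have hy2 := hy.2
      simp only at hxy hx2 hy2
      exact Prod.ext_iff.mpr ⟨by omega, by omega⟩
    rw [e2]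
    exact sum_le_over_support _ _ _ hgb0 hgbnn
  have hB3 : (∑ st ∈ B, gam st) ≤ Sam :=
    sum_le_over_support _ _ _ hgam0 hgamnn
  have hnorm' : geomNorm' k b am = Sam + Sb := rfl
  rw [hsplit, hnorm']
  nlinarith [hSamnn, hSbnn, sq_nonneg (k : ℝ)]


/-- The two families of norms `{‖·‖_k : k ≥ 1}` and `{‖·‖'_k : k ≥ 1}` on the algebraic
Toeplitz algebra (with geometric weights `k^{i+j}`, resp. `k^{|p|}`) are equivalent. -/
theorem stmt15 :
    (∀ k : ℕ, 1 ≤ k → ∃ k' : ℕ, 1 ≤ k' ∧ ∃ C : ℝ, 0 < C ∧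
      ∀ (a : Talg) (c : ℕ × ℕ →₀ ℂ) (b : ℤ →₀ ℂ) (am : ℕ × ℕ →₀ ℂ),
        a = (c.sum fun ij x => x • (Tv ^ ij.1 * Tu ^ ij.2)) →
        a = ((b.sum fun p x => x • Tz p) + am.sum fun ij x => x • Te ij.1 ij.2) →
        geomNorm' k b am ≤ C * geomNorm k' c) ∧
    (∀ k : ℕ, 1 ≤ k → ∃ k'' : ℕ, 1 ≤ k'' ∧ ∃ C' : ℝ, 0 < C' ∧
      ∀ (a : Talg) (c : ℕ × ℕ →₀ ℂ) (b : ℤ →₀ ℂ) (am : ℕ × ℕ →₀ ℂ),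
        a = (c.sum fun ij x => x • (Tv ^ ij.1 * Tu ^ ij.2)) →
        a = ((b.sum fun p x => x • Tz p) + am.sum fun ij x => x • Te ij.1 ij.2) →
        geomNorm k c ≤ C' * geomNorm' k'' b am) := by
  constructor
  · intro k hk
    refine ⟨2 * k, by omega, 2, by norm_num, ?_⟩
    intro a c b am h1 h2
    have h := h1.symm.trans h2
    have e1 := part1a k hk c b am h
    have e2 := part1b k hk c b am h
    have e3 := geomNorm_mono k (2 * k) (by omega) c
    have e4 : geomNorm' k b am
        = (am.sum fun ij x => ‖x‖ * (k : ℝ) ^ (ij.1 + ij.2))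
          + b.sum (fun p x => ‖x‖ * (k : ℝ) ^ p.natAbs) := rfl
    rw [e4]
    linarith
  · intro k hk
    refine ⟨k, hk, 2 + (k : ℝ) ^ 2, by positivity, ?_⟩
    intro a c b am h1 h2
    exact part2 k hk c b am (h1.symm.trans h2)
end
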